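/- Let η : (0,∞) → [0,1) be differentiable with η_max = sup_{w>0} η(w) < 1 and η₁max = sup_{w>0} |w·η'(w)| < ∞. Define g(φ̃, c) = c·(√((1-η(c·cos φ̃))²·cos²φ̃ + sin²φ̃) - 1). Then for all c > 0 and φ̃ ∈ (-π/2, π/2), |∂g/∂c (φ̃, c)| ≤ η_max + η₁max. -/

import Mathlib

set_option maxHeartbeats 1000000


open Real Set

theorem stmt_4 (η : ℝ → ℝ) (ηmax η1max : ℝ) (hηmax1 : ηmax < 1)
    (hηd : ∀ w : ℝ, 0 < w → DifferentiableAt ℝ η w)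
    (hηr : ∀ w : ℝ, 0 < w → 0 ≤ η w ∧ η w ≤ ηmax)
    (hη1 : ∀ w : ℝ, 0 < w → |w * deriv η w| ≤ η1max) :
    ∀ c : ℝ, 0 < c → ∀ φt ∈ Set.Ioo (-(Real.pi/2)) (Real.pi/2),
      |deriv (fun c' : ℝ =>
          c' * (Real.sqrt ((1 - η (c' * Real.cos φt))^2 * (Real.cos φt)^2 + (Real.sin φt)^2) - 1)) c|
        ≤ ηmax + η1max := by
  intro c hc φt hφ
  have hco : 0 < Real.cos φt := Real.cos_pos_of_mem_Ioo hφ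
  set co := Real.cos φt with hco_def
  set si := Real.sin φt with hsi_def
  have hpy : si ^ 2 + co ^ 2 = 1 := Real.sin_sq_add_cos_sq φt
  have hco1 : co ≤ 1 := Real.cos_le_one φt
  have hw : 0 < c * co := mul_pos hc hco
  set w := c * co with hw_def
  have hD := (hηd w hw).hasDerivAt
  set D := deriv η w with hD_def
  set e := η w with he_def
  obtain ⟨he0, he1⟩ := hηr w hw
  have hwD : |w * D| ≤ η1max := hη1 w hw
  have hηmax0 : 0 ≤ ηmax := le_trans he0 he1
  have hη1max0 : 0 ≤ η1max := le_trans (abs_nonneg _) (hη1 1 one_pos)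
  have h1e : 0 < 1 - e := by
    have : e ≤ ηmax := he1
    linarith
  set u := (1 - e) ^ 2 * co ^ 2 + si ^ 2 with hu_def
  have hupos : 0 < u :=
    add_pos_of_pos_of_nonneg (mul_pos (pow_pos h1e 2) (pow_pos hco 2)) (sq_nonneg si)
  have hu0 : 0 ≤ u := le_of_lt hupos
  have hune : u ≠ 0 := ne_of_gt hupos
  set s := Real.sqrt u with hs_def
  have hs2 : s ^ 2 = u := Real.sq_sqrt hu0
  have hspos : 0 < s := Real.sqrt_pos.mpr hupos
  -- derivative computation
  have hmul : HasDerivAt (fun c' : ℝ => c' * co) co c := by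
    simpa using (hasDerivAt_id c).mul_const co
  have h3 : HasDerivAt (fun c' => η (c' * co)) (D * co) c := hD.comp c hmul
  have h4 : HasDerivAt (fun c' => (1 - η (c' * co)) ^ 2)
      ((2 : ℝ) * (1 - e) ^ 1 * (0 - D * co)) c := by
    have := ((hasDerivAt_const c (1 : ℝ)).sub h3).fun_pow 2
    simpa using this
  have h5 : HasDerivAt (fun c' => (1 - η (c' * co)) ^ 2 * co ^ 2 + si ^ 2)
      ((2 : ℝ) * (1 - e) ^ 1 * (0 - D * co) * co ^ 2) c :=
    (h4.mul_const _).add_const _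
  have h6 : HasDerivAt (fun c' => Real.sqrt ((1 - η (c' * co)) ^ 2 * co ^ 2 + si ^ 2))
      ((2 : ℝ) * (1 - e) ^ 1 * (0 - D * co) * co ^ 2 / (2 * s)) c := by
    have := h5.sqrt (f := fun c' => (1 - η (c' * co)) ^ 2 * co ^ 2 + si ^ 2) (x := c) ?_
    · convert this using 2
    · show ((1 - η (c * co)) ^ 2 * co ^ 2 + si ^ 2 : ℝ) ≠ 0
      rw [← hw_def, ← he_def, ← hu_def]
      exact hune
  have h7 : HasDerivAt (fun c' : ℝ =>
      c' * (Real.sqrt ((1 - η (c' * co)) ^ 2 * co ^ 2 + si ^ 2) - 1))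
      (1 * (Real.sqrt ((1 - η (c * co)) ^ 2 * co ^ 2 + si ^ 2) - 1) +
        c * ((2 : ℝ) * (1 - e) ^ 1 * (0 - D * co) * co ^ 2 / (2 * s))) c :=
    (hasDerivAt_id c).mul (h6.sub_const 1)
  have hval : Real.sqrt ((1 - η (c * co)) ^ 2 * co ^ 2 + si ^ 2) = s := by
    rw [← hw_def, ← he_def, ← hu_def, hs_def]
  rw [h7.deriv, hval]
  have hT2 : c * ((2 : ℝ) * (1 - e) ^ 1 * (0 - D * co) * co ^ 2 / (2 * s))
      = -(((1 - e) * co ^ 2 / s) * (w * D)) := by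
    rw [hw_def]
    field_simp
    ring
  rw [hT2, one_mul]
  -- now pure real-number inequalities
  have he0' : 0 ≤ e := he0
  have he1' : e ≤ ηmax := he1
  clear_value s u e D w si co
  clear hD h3 h4 h5 h6 h7 hmul hval hT2 hune he0 he1 hηd hηr hη1 hφ hupos hu0
  have hco2 : co ^ 2 ≤ 1 := by nlinarith
  have hecosq : e * co ^ 2 ≤ ηmax := by nlinarith
  have hkey : (1 - e * co ^ 2) ^ 2 ≤ u := by nlinarith [sq_nonneg (e * co * si)]
  have hA : 1 - e * co ^ 2 ≤ s := by nlinarith [sq_nonneg (s - (1 - e * co ^ 2)), sq_nonneg (s + (1 - e * co ^ 2))]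
  have hu1 : u ≤ 1 := by
    nlinarith [mul_nonneg (mul_nonneg he0' (by linarith : (0:ℝ) ≤ 2 - e)) (sq_nonneg co)]
  have hB : s ≤ 1 := by nlinarith [sq_nonneg (s - 1)]
  have hK : (1 - e) * co ^ 2 ≤ s := by nlinarith [mul_pos h1e hco]
  have hk0 : 0 ≤ (1 - e) * co ^ 2 / s := by positivity
  have hk1 : (1 - e) * co ^ 2 / s ≤ 1 := by
    rw [div_le_one hspos]; exact hK
  have habs1 : |s - 1| ≤ ηmax := by
    rw [abs_of_nonpos (by linarith)]
    linarith
  have habs2 : |-(((1 - e) * co ^ 2 / s) * (w * D))| ≤ η1max := by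
    rw [abs_neg, abs_mul, abs_of_nonneg hk0]
    calc (1 - e) * co ^ 2 / s * |w * D| ≤ 1 * η1max :=
          mul_le_mul hk1 hwD (abs_nonneg _) one_pos.le
      _ = η1max := one_mul _
  calc |(s - 1) + -(((1 - e) * co ^ 2 / s) * (w * D))|
      ≤ |s - 1| + |-(((1 - e) * co ^ 2 / s) * (w * D))| := abs_add_le _ _
    _ ≤ ηmax + η1max := add_le_add habs1 habs2
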